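/- Monotonic decrease of the forward-backward sweep: in the discrete-time finite-state control problem, suppose the sweep updates controls sequentially: at each time $t$ (in any order covering $0,\dots,T-dt$), $u_t^{k+1}$ is chosen to minimize $u \mapsto \sum_s p_t(s)\,(f(t,s,u) + \sum_{s'}P_u(s,s')w_{t+dt}(s'))$ where $p_t$ is computed from the already-updated controls $u_{0:t-dt}^{k+1}$ and $w_{t+dt}$ from the not-yet-updated controls $u_{t+dt:T-dt}^{k}$. Then the cost is non-increasing at each update: $J[u_{0:t}^{k+1}, u_{t+dt:T-dt}^{k}] \le J[u_{0:t-dt}^{k+1}, u_{t:T-dt}^{k}]$, and hence $J[u_{0:T-dt}^{k+1}] \le J[u_{0:T-dt}^{k}]$. -/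

import Mathlib

open Finset

/-- Forward state distribution at time `t` induced by `p0` and the controls `u`. -/
def pF {S U : Type} [Fintype S] (P : U → S → S → ℝ) (p0 : S → ℝ)
    (u : ℕ → U) : ℕ → S → ℝ
  | 0 => p0
  | (t+1) => fun s' => ∑ s : S, pF P p0 u t s * P (u t) s s'

/-- Backward value function, indexed by the number `k` of remaining steps. -/
def wAux {S U : Type} [Fintype S] (P : U → S → S → ℝ)
    (f : ℕ → S → U → ℝ) (g : S → ℝ) (N : ℕ) (u : ℕ → U) : ℕ → S → ℝ
  | 0 => g
  | (k+1) => fun s =>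
      f (N - (k+1)) s (u (N - (k+1)))
        + ∑ s' : S, P (u (N - (k+1))) s s' * wAux P f g N u k s'

/-- Backward value function at time `t`, with `w_N = g`. -/
def wVal {S U : Type} [Fintype S] (P : U → S → S → ℝ)
    (f : ℕ → S → U → ℝ) (g : S → ℝ) (N : ℕ) (u : ℕ → U) (t : ℕ) : S → ℝ :=
  wAux P f g N u (N - t)

/-- Total expected cost. -/
def Jval {S U : Type} [Fintype S] (P : U → S → S → ℝ) (p0 : S → ℝ)
    (f : ℕ → S → U → ℝ) (g : S → ℝ) (N : ℕ) (u : ℕ → U) : ℝ :=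
  (∑ t ∈ Finset.range N, ∑ s : S, pF P p0 u t s * f t s (u t))
    + ∑ s : S, pF P p0 u N s * g s

/-- Hybrid control sequence of the sweep: updated controls `uNew` before time `t`,
old controls `uOld` from time `t` onward. -/
def hyb {U : Type} (uOld uNew : ℕ → U) (t : ℕ) : ℕ → U :=
  fun τ => if τ < t then uNew τ else uOld τ

/-! Consecutive hybrid control sequences differ only at one time `t`. Split the cost at `t` into
the running cost before `t` plus the expected Hamiltonian at `t` against the cost-to-go `w_{t+1}`:
the running cost and `p_t` depend only on the earlier controls and `w_{t+1}` only on the later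
ones, so the two costs differ only in the control inside the Hamiltonian, and the minimality of
the new control makes each update a descent step. -/

lemma sum_mul_add_sum_mul {S R : Type} [Fintype S] [CommSemiring R] (p a w : S → R)
    (Q : S → S → R) :
    ∑ s : S, p s * (a s + ∑ s' : S, Q s s' * w s')
      = ∑ s : S, p s * a s + ∑ s' : S, (∑ s : S, p s * Q s s') * w s' := by
  simp only [mul_add, sum_add_distrib, mul_sum, sum_mul, mul_assoc]
  rw [sum_comm (f := fun s s' => p s * (Q s s' * w s'))]

section Cost

variable {S U : Type} [Fintype S] (P : U → S → S → ℝ) (p0 : S → ℝ) (f : ℕ → S → U → ℝ)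
  (g : S → ℝ) (N : ℕ)

def runCost (u : ℕ → U) (t : ℕ) : ℝ :=
  ∑ τ ∈ range t, ∑ s : S, pF P p0 u τ s * f τ s (u τ)

lemma pF_congr {u u' : ℕ → U} {t : ℕ} (h : ∀ τ < t, u τ = u' τ) :
    pF P p0 u t = pF P p0 u' t := by
  induction t with
  | zero => rfl
  | succ t ih =>
    funext s'
    simp only [pF, ih fun τ hτ => h τ (Nat.lt_succ_of_lt hτ), h t (Nat.lt_succ_self t)]

lemma runCost_congr {u u' : ℕ → U} {t : ℕ} (h : ∀ τ < t, u τ = u' τ) :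
    runCost P p0 f u t = runCost P p0 f u' t := by
  refine sum_congr rfl fun τ hτ => ?_
  have hτt := mem_range.mp hτ
  rw [pF_congr P p0 fun τ' hτ' => h τ' (hτ'.trans hτt), h τ hτt]

lemma wAux_congr {u u' : ℕ → U} {k : ℕ} (h : ∀ τ, N - k ≤ τ → u τ = u' τ) :
    wAux P f g N u k = wAux P f g N u' k := by
  induction k with
  | zero => rfl
  | succ k ih =>
    funext s
    simp only [wAux, ih fun τ hτ => h τ (le_trans (by omega) hτ), h (N - (k + 1)) le_rfl]

lemma wVal_congr {u u' : ℕ → U} {t : ℕ} (h : ∀ τ, t ≤ τ → u τ = u' τ) :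
    wVal P f g N u t = wVal P f g N u' t := by
  rcases le_or_gt t N with ht | ht
  · exact wAux_congr P f g N fun τ hτ => h τ (by omega)
  · rw [wVal, wVal, Nat.sub_eq_zero_of_le ht.le, wAux, wAux]

lemma wVal_self (u : ℕ → U) : wVal P f g N u N = g := by
  simp [wVal, wAux]

lemma wVal_of_lt (u : ℕ → U) {t : ℕ} (ht : t < N) (s : S) :
    wVal P f g N u t s
      = f t s (u t) + ∑ s' : S, P (u t) s s' * wVal P f g N u (t + 1) s' := by
  obtain ⟨k, hk⟩ : ∃ k, N - t = k + 1 := ⟨N - (t + 1), by omega⟩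
  have hNk : N - (k + 1) = t := by omega
  have hNt : N - (t + 1) = k := by omega
  rw [wVal, hk, wAux, hNk, wVal, hNt]

lemma Jval_eq_runCost_add_wVal (u : ℕ → U) {t : ℕ} (ht : t ≤ N) :
    Jval P p0 f g N u = runCost P p0 f u t + ∑ s : S, pF P p0 u t s * wVal P f g N u t s := by
  induction ht using Nat.decreasingInduction with
  | self => rw [wVal_self]; rfl
  | of_succ t ht ih =>
    simp only [wVal_of_lt P f g N u ht, sum_mul_add_sum_mul]
    rw [ih, runCost, sum_range_succ, add_assoc]
    rfl

lemma Jval_congr {u u' : ℕ → U} (h : ∀ τ < N, u τ = u' τ) :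
    Jval P p0 f g N u = Jval P p0 f g N u' := by
  rw [Jval_eq_runCost_add_wVal P p0 f g N u le_rfl, Jval_eq_runCost_add_wVal P p0 f g N u' le_rfl,
    runCost_congr P p0 f h, pF_congr P p0 h, wVal_self, wVal_self]

lemma Jval_eq_runCost_add_hamiltonian (u : ℕ → U) {t : ℕ} (ht : t < N) :
    Jval P p0 f g N u = runCost P p0 f u t + ∑ s : S, pF P p0 u t s *
      (f t s (u t) + ∑ s' : S, P (u t) s s' * wVal P f g N u (t + 1) s') := by
  simp only [Jval_eq_runCost_add_wVal P p0 f g N u ht.le, wVal_of_lt P f g N u ht]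

end Cost

section Sweep

variable {U : Type} (uOld uNew : ℕ → U)

lemma hyb_of_lt {t τ : ℕ} (h : τ < t) : hyb uOld uNew t τ = uNew τ := if_pos h

lemma hyb_of_le {t τ : ℕ} (h : t ≤ τ) : hyb uOld uNew t τ = uOld τ := if_neg (not_lt.mpr h)

lemma hyb_zero : hyb uOld uNew 0 = uOld := funext fun τ => hyb_of_le uOld uNew τ.zero_le

lemma hyb_succ_of_lt {t τ : ℕ} (h : τ < t) :
    hyb uOld uNew (t + 1) τ = hyb uOld uNew t τ := by
  rw [hyb_of_lt _ _ h, hyb_of_lt _ _ (Nat.lt_succ_of_lt h)]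

variable {S : Type} [Fintype S] (P : U → S → S → ℝ) (p0 : S → ℝ) (f : ℕ → S → U → ℝ)
  (g : S → ℝ) (N : ℕ)

lemma Jval_hyb_succ_le {t : ℕ} (ht : t < N)
    (hmin : ∑ s : S, pF P p0 (hyb uOld uNew t) t s *
        (f t s (uNew t) + ∑ s' : S, P (uNew t) s s' * wVal P f g N uOld (t + 1) s')
      ≤ ∑ s : S, pF P p0 (hyb uOld uNew t) t s *
        (f t s (uOld t) + ∑ s' : S, P (uOld t) s s' * wVal P f g N uOld (t + 1) s')) :
    Jval P p0 f g N (hyb uOld uNew (t + 1)) ≤ Jval P p0 f g N (hyb uOld uNew t) := by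
  have hpast : ∀ τ < t, hyb uOld uNew (t + 1) τ = hyb uOld uNew t τ :=
    fun τ => hyb_succ_of_lt uOld uNew
  have hfuture : ∀ k ≤ t + 1, ∀ τ, t + 1 ≤ τ → hyb uOld uNew k τ = uOld τ :=
    fun k hk τ hτ => hyb_of_le uOld uNew (hk.trans hτ)
  rw [Jval_eq_runCost_add_hamiltonian P p0 f g N _ ht,
    Jval_eq_runCost_add_hamiltonian P p0 f g N _ ht, runCost_congr P p0 f hpast,
    pF_congr P p0 hpast, wVal_congr P f g N (hfuture (t + 1) le_rfl),
    wVal_congr P f g N (hfuture t t.le_succ),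
    hyb_of_lt uOld uNew t.lt_succ_self, hyb_of_le uOld uNew le_rfl]
  exact add_le_add le_rfl hmin

end Sweep

theorem fbsm_monotone_decrease_general
    {S U : Type} [Fintype S]
    (P : U → S → S → ℝ)
    (p0 : S → ℝ)
    (f : ℕ → S → U → ℝ) (g : S → ℝ) (N : ℕ)
    (uk uk1 : ℕ → U)
    -- at each step, the updated control minimizes the expected Hamiltonian,
    -- with `p_t` computed from the already-updated controls and `w_{t+dt}`
    -- from the not-yet-updated controls
    (hmin : ∀ t < N, ∀ v : U,
      (∑ s : S, pF P p0 (hyb uk uk1 t) t s *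
        (f t s (uk1 t) + ∑ s' : S, P (uk1 t) s s' * wVal P f g N uk (t+1) s'))
      ≤ ∑ s : S, pF P p0 (hyb uk uk1 t) t s *
        (f t s v + ∑ s' : S, P v s s' * wVal P f g N uk (t+1) s')) :
    (∀ t < N,
      Jval P p0 f g N (hyb uk uk1 (t+1)) ≤ Jval P p0 f g N (hyb uk uk1 t)) ∧
    Jval P p0 f g N uk1 ≤ Jval P p0 f g N uk := by
  have step : ∀ t < N,
      Jval P p0 f g N (hyb uk uk1 (t+1)) ≤ Jval P p0 f g N (hyb uk uk1 t) :=
    fun t ht => Jval_hyb_succ_le uk uk1 P p0 f g N ht (hmin t ht (uk t))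
  -- Past the horizon the updates no longer change the cost, so the cost is antitone in `t`.
  have hanti : Antitone fun t => Jval P p0 f g N (hyb uk uk1 t) := by
    refine antitone_nat_of_succ_le fun t => ?_
    rcases lt_or_ge t N with ht | ht
    · exact step t ht
    · exact (Jval_congr P p0 f g N fun τ hτ => hyb_succ_of_lt uk uk1 (hτ.trans_le ht)).le
  have hnew : Jval P p0 f g N uk1 = Jval P p0 f g N (hyb uk uk1 N) :=
    Jval_congr P p0 f g N fun τ hτ => (hyb_of_lt uk uk1 hτ).symm
  refine ⟨step, ?_⟩
  rw [hnew, ← hyb_zero uk uk1]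
  exact hanti N.zero_le

theorem fbsm_monotone_decrease
    {S U : Type} [Fintype S]
    (P : U → S → S → ℝ)
    (hPnonneg : ∀ u s s', 0 ≤ P u s s')
    (hPsum : ∀ u s, ∑ s' : S, P u s s' = 1)
    (p0 : S → ℝ) (hp0nonneg : ∀ s, 0 ≤ p0 s) (hp0sum : ∑ s : S, p0 s = 1)
    (f : ℕ → S → U → ℝ) (g : S → ℝ) (N : ℕ)
    (uk uk1 : ℕ → U)
    -- at each step, the updated control minimizes the expected Hamiltonian,
    -- with `p_t` computed from the already-updated controls and `w_{t+dt}`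
    -- from the not-yet-updated controls
    (hmin : ∀ t < N, ∀ v : U,
      (∑ s : S, pF P p0 (hyb uk uk1 t) t s *
        (f t s (uk1 t) + ∑ s' : S, P (uk1 t) s s' * wVal P f g N uk (t+1) s'))
      ≤ ∑ s : S, pF P p0 (hyb uk uk1 t) t s *
        (f t s v + ∑ s' : S, P v s s' * wVal P f g N uk (t+1) s')) :
    (∀ t < N,
      Jval P p0 f g N (hyb uk uk1 (t+1)) ≤ Jval P p0 f g N (hyb uk uk1 t)) ∧
    Jval P p0 f g N uk1 ≤ Jval P p0 f g N uk :=
  fbsm_monotone_decrease_general P p0 f g N uk uk1 hmin
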